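/- arXiv:2205.08280 — 5 statements merged into one kernel-verified Lean document; each statement's English description precedes it below -/
import Mathlib

section
/- Let Sr(n,p) denote the number of intervals F ⊆ {1,...,n} satisfying p·min F ≥ |F| (including the empty set convention: only nonempty intervals are counted). Then for all n, p ≥ 1, Sr(n+1,p) - Sr(n,p) = (n+2) - ⌈(n+2)/(p+1)⌉. -/
/-- Ceiling of a / b for natural numbers. -/
def ceilDiv (a b : ℕ) : ℕ := (a + b - 1) / b

/-- Number of nonempty intervals F ⊆ {1,...,n} with p·min F ≥ |F|. -/
noncomputable def Sr (n p : ℕ) : ℕ :=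
  Nat.card {F : Finset ℕ //
    (∃ a b : ℕ, a ≤ b ∧ F = Finset.Icc a b) ∧
    F ⊆ Finset.Icc 1 n ∧
    p * sInf (F : Set ℕ) ≥ F.card}

/-! An interval of `{1, …, n + 1}` not contained in `{1, …, n}` is `{a, …, n + 1}`, and it is
counted exactly when `p * a ≥ n + 2 - a`, i.e. `a ≥ ⌈(n + 2) / (p + 1)⌉`; there are
`n + 2 - ⌈(n + 2) / (p + 1)⌉` such `a ≤ n + 1`. -/

open Finset

lemma ceilDiv_le_iff {c d a : ℕ} (hd : 0 < d) : ceilDiv c d ≤ a ↔ c ≤ d * a :=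
  ceilDiv_le_iff_le_mul hd

/-- The endpoints `(a, b)` of the intervals counted by `Sr n p`; the condition
`p * a ≥ b - a + 1` is written as `b + 1 ≤ (p + 1) * a` to avoid truncated subtraction. -/
def intervalEnds (n p : ℕ) : Finset (ℕ × ℕ) :=
  (Icc 1 n ×ˢ Icc 1 n).filter fun q => q.1 ≤ q.2 ∧ q.2 + 1 ≤ (p + 1) * q.1

lemma mem_intervalEnds {n p : ℕ} {q : ℕ × ℕ} :
    q ∈ intervalEnds n p ↔ 1 ≤ q.1 ∧ q.1 ≤ q.2 ∧ q.2 ≤ n ∧ q.2 + 1 ≤ (p + 1) * q.1 := by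
  simp only [intervalEnds, mem_filter, mem_product, mem_Icc]
  omega

lemma Icc_injOn_le : Set.InjOn (fun q : ℕ × ℕ => Icc q.1 q.2) {q | q.1 ≤ q.2} :=
  fun q hq r _ h => by
    rw [← coe_inj, coe_Icc, coe_Icc, Set.Icc_eq_Icc_iff hq] at h
    exact Prod.ext h.1 h.2

lemma Sr_eq_card_intervalEnds (n p : ℕ) : Sr n p = #(intervalEnds n p) := by
  have hset : {F : Finset ℕ | (∃ a b : ℕ, a ≤ b ∧ F = Icc a b) ∧ F ⊆ Icc 1 n ∧
      p * sInf (F : Set ℕ) ≥ F.card} = (intervalEnds n p).image fun q => Icc q.1 q.2 := by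
    ext F
    simp only [Set.mem_ofPred_eq, coe_image, Set.mem_image, mem_coe, mem_intervalEnds,
      Prod.exists]
    constructor
    · rintro ⟨⟨a, b, hab, rfl⟩, hsub, hcard⟩
      rw [Icc_subset_Icc_iff hab] at hsub
      rw [coe_Icc, csInf_Icc hab, Nat.card_Icc] at hcard
      exact ⟨a, b, ⟨hsub.1, hab, hsub.2, by rw [add_mul]; omega⟩, rfl⟩
    · rintro ⟨a, b, ⟨ha, hab, hb, hlen⟩, rfl⟩
      refine ⟨⟨a, b, hab, rfl⟩, Icc_subset_Icc ha hb, ?_⟩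
      rw [coe_Icc, csInf_Icc hab, Nat.card_Icc, add_mul] at *
      omega
  rw [Sr, ← Set.coe_ofPred, hset, Nat.card_coe_set_eq, Set.ncard_coe_finset, card_image_of_injOn]
  exact Icc_injOn_le.mono fun q hq => (mem_intervalEnds.mp hq).2.1

lemma intervalEnds_succ (n p : ℕ) :
    intervalEnds (n + 1) p = intervalEnds n p ∪
      (Icc (ceilDiv (n + 2) (p + 1)) (n + 1)).image fun a => (a, n + 1) := by
  ext ⟨a, b⟩
  simp only [mem_union, mem_image, mem_Icc, mem_intervalEnds, ceilDiv_le_iff p.succ_pos,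
    Prod.mk.injEq]
  constructor
  · rintro ⟨ha, hab, hb, hlen⟩
    rcases hb.lt_or_eq with hb | rfl
    · exact Or.inl ⟨ha, hab, by omega, hlen⟩
    · exact Or.inr ⟨a, ⟨by omega, hab⟩, rfl, rfl⟩
  · rintro (⟨ha, hab, hb, hlen⟩ | ⟨a, ⟨hlen, ha⟩, rfl, rfl⟩)
    · exact ⟨ha, hab, by omega, hlen⟩
    · have : 0 < a := Nat.pos_of_ne_zero fun h => by simp [h] at hlen
      exact ⟨this, ha, le_rfl, hlen⟩

lemma disjoint_intervalEnds_image (n p m : ℕ) :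
    Disjoint (intervalEnds n p) ((Icc m (n + 1)).image fun a => (a, n + 1)) := by
  simp only [disjoint_left, mem_image, not_exists, not_and]
  rintro q hq a - rfl
  have := (mem_intervalEnds.mp hq).2.2.1
  omega

theorem stmt_2_general (n p : ℕ) :
    Sr (n + 1) p - Sr n p = (n + 2) - ceilDiv (n + 2) (p + 1) := by
  rw [Sr_eq_card_intervalEnds, Sr_eq_card_intervalEnds, intervalEnds_succ,
    card_union_of_disjoint (disjoint_intervalEnds_image n p _),
    card_image_of_injective _ fun a b h => (Prod.mk.inj h).1, Nat.card_Icc]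
  omega

theorem stmt_2 (n p : ℕ) (hn : 1 ≤ n) (hp : 1 ≤ p) :
    Sr (n + 1) p - Sr n p = (n + 2) - ceilDiv (n + 2) (p + 1) :=
  stmt_2_general n p
end

section
/- For all n, p ≥ 1, the number of nonempty intervals F ⊆ {1,...,n} with p·min F ≥ |F| equals the number of edges of the Turán graph on n+1 vertices with p+1 parts. -/
/-!
Both sides are sums over `b ≤ n` of `b - b / (p + 1)`. Adding a vertex `b` to the Turán graph
`T(b, r)` puts it into a smallest part, of size `b / r`, so it gains `b - b / r` edges. On the
other side, the interval `[a, b]` satisfies `p·a ≥ b - a + 1` exactly when `b < (p + 1)·a`, i.e.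
`b / (p + 1) < a ≤ b`, which leaves `b - b / (p + 1)` choices of `a` for each right end `b`.
-/

/-- Number of edges of the Turán graph on n vertices with p parts. -/
def turanEdges (n p : ℕ) : ℕ :=
  n.choose 2 - ((n % p) * (n / p + 1).choose 2 + (p - n % p) * (n / p).choose 2)

open Finset

/-- Edges inside the parts of `T(m, r)`: `m % r` parts of size `m / r + 1`, the rest of size
`m / r`. -/
def turanIntraEdges (m r : ℕ) : ℕ :=
  (m % r) * (m / r + 1).choose 2 + (r - m % r) * (m / r).choose 2

lemma turanIntraEdges_eq (m : ℕ) {r : ℕ} (hr : 0 < r) :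
    turanIntraEdges m r = r * (m / r).choose 2 + m % r * (m / r) := by
  rw [turanIntraEdges, Nat.choose_succ_succ', Nat.choose_one_right]
  zify [(Nat.mod_lt m hr).le]
  ring

lemma turanIntraEdges_succ (m : ℕ) {r : ℕ} (hr : 0 < r) :
    turanIntraEdges (m + 1) r = turanIntraEdges m r + m / r := by
  have hm := Nat.div_add_mod m r
  have hm' := Nat.div_add_mod (m + 1) r
  have hmod_lt := Nat.mod_lt (m + 1) hr
  rw [turanIntraEdges_eq _ hr, turanIntraEdges_eq _ hr]
  by_cases hdvd : r ∣ m + 1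
  · rw [Nat.succ_div_of_dvd hdvd] at hm' ⊢
    rw [Nat.mod_eq_zero_of_dvd hdvd] at hm' ⊢
    have hs : m % r * (m / r) + m / r = r * (m / r) := by
      rw [← add_one_mul, show m % r + 1 = r by rw [mul_add_one] at hm'; omega]
    rw [add_assoc, hs, Nat.choose_succ_succ', Nat.choose_one_right]
    ring
  · rw [Nat.succ_div_of_not_dvd hdvd] at hm' ⊢
    rw [show (m + 1) % r = m % r + 1 by omega]
    ring

lemma turanIntraEdges_eq_sum (m : ℕ) {r : ℕ} (hr : 0 < r) :
    turanIntraEdges m r = ∑ b ∈ range m, b / r := by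
  induction m with
  | zero => simp [turanIntraEdges]
  | succ m ih => rw [turanIntraEdges_succ m hr, ih, sum_range_succ]

lemma turanEdges_eq_sum (m : ℕ) {r : ℕ} (hr : 0 < r) :
    turanEdges m r = ∑ b ∈ range m, (b - b / r) := by
  rw [sum_tsub_distrib _ fun b _ => Nat.div_le_self b r, sum_range_id, ← Nat.choose_two_right,
    ← turanIntraEdges_eq_sum m hr]
  rfl

lemma Icc_subset_Icc_one_and_card_le_mul_sInf_iff {a b n p : ℕ} (hab : a ≤ b) :
    (Icc a b ⊆ Icc 1 n ∧ p * sInf (Icc a b : Set ℕ) ≥ #(Icc a b)) ↔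
      b < n + 1 ∧ b / (p + 1) < a := by
  rw [Icc_subset_Icc_iff hab, coe_Icc, csInf_Icc hab, Nat.card_Icc,
    Nat.div_lt_iff_lt_mul (by omega : 0 < p + 1), mul_add_one, mul_comm a p]
  obtain rfl | ha := Nat.eq_zero_or_pos a
  · simp only [mul_zero]
    omega
  · omega

lemma Sr_eq_card_sigma (n p : ℕ) :
    Sr n p = #((range (n + 1)).sigma fun b => Ioc (b / (p + 1)) b) := by
  set T := (range (n + 1)).sigma fun b => Ioc (b / (p + 1)) b
  have hT : ∀ x ∈ T, x.2 ≤ x.1 := fun x hx => (mem_Ioc.mp (mem_sigma.mp hx).2).2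
  have hinj : Set.InjOn (fun x : Σ _ : ℕ, ℕ => Icc x.2 x.1) T := by
    rintro ⟨b, a⟩ hx ⟨b', a'⟩ hy h
    obtain ⟨rfl, rfl⟩ := (Set.Icc_eq_Icc_iff (hT _ hx)).mp (by simpa [← coe_Icc] using h)
    rfl
  refine (Nat.card_coe_set_eq {F : Finset ℕ | _}).trans ?_
  rw [← Set.ncard_coe_finset, ← hinj.ncard_image]
  congr 1
  ext F
  simp only [T, Set.mem_ofPred_eq, Set.mem_image, mem_coe, mem_sigma, mem_range, mem_Ioc,
    Sigma.exists]
  constructor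
  · rintro ⟨⟨a, b, hab, rfl⟩, h⟩
    obtain ⟨hb, ha⟩ := (Icc_subset_Icc_one_and_card_le_mul_sInf_iff hab).mp h
    exact ⟨b, a, ⟨hb, ha, hab⟩, rfl⟩
  · rintro ⟨b, a, ⟨hb, ha, hab⟩, rfl⟩
    exact ⟨⟨a, b, hab, rfl⟩, (Icc_subset_Icc_one_and_card_le_mul_sInf_iff hab).mpr ⟨hb, ha⟩⟩

theorem stmt_4_general (n p : ℕ) :
    Sr n p = turanEdges (n + 1) (p + 1) := by
  rw [Sr_eq_card_sigma, card_sigma, turanEdges_eq_sum _ p.succ_pos]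
  exact sum_congr rfl fun b _ => Nat.card_Ioc _ _

theorem stmt_4 (n p : ℕ) (hn : 1 ≤ n) (hp : 1 ≤ p) :
    Sr n p = turanEdges (n + 1) (p + 1) :=
  stmt_4_general n p
end

section
/- For positive integers p, q, k with 1 ≤ k ≤ (p-1)q, we have ⌊k/q⌋ = ⌊(pk + p - 1)/(pq + 1)⌋. -/
/-!
Write `k = m q + s` with `m = ⌊k/q⌋` and `0 ≤ s < q`. Then
`p k + r = m (p q + 1) + (p s + r - m)`, and the remainder `p s + r - m` lies in `[0, p q]`
as soon as `m ≤ r ≤ p + m`; the theorem is the case `r = p - 1`.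
-/

theorem Nat.mul_add_div_mul_add_one {p q k r : ℕ} (hq : 0 < q) (hlo : k / q ≤ r)
    (hhi : r ≤ p + k / q) : (p * k + r) / (p * q + 1) = k / q := by
  set m := k / q
  have hmk : m * q ≤ k := Nat.div_mul_le_self k q
  have hkm : k + 1 ≤ (m + 1) * q := Nat.lt_mul_of_div_lt (Nat.lt_succ_self m) hq
  apply Nat.div_eq_of_lt_le
  · calc m * (p * q + 1) = p * (m * q) + m := by ring
      _ ≤ p * k + r := Nat.add_le_add (Nat.mul_le_mul_left p hmk) hlo
  · calc p * k + r < p * (k + 1) + m + 1 := by linarith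
      _ ≤ p * ((m + 1) * q) + m + 1 := by gcongr
      _ = (m + 1) * (p * q + 1) := by ring

theorem stmt_6_general (p q k : ℕ) (hq : 1 ≤ q)
    (hle : k ≤ (p - 1) * q) :
    k / q = (p * k + p - 1) / (p * q + 1) := by
  have hkq : k / q ≤ p - 1 := Nat.div_le_of_le_mul (by rwa [Nat.mul_comm])
  have hsub : p * k + p - 1 = p * k + (p - 1) := by
    rcases p with _ | p <;> simp
  rw [hsub, Nat.mul_add_div_mul_add_one hq hkq ((Nat.sub_le p 1).trans (Nat.le_add_right _ _))]

theorem stmt_6 (p q k : ℕ) (hp : 1 ≤ p) (hq : 1 ≤ q) (hk : 1 ≤ k)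
    (hle : k ≤ (p - 1) * q) :
    k / q = (p * k + p - 1) / (p * q + 1) :=
  stmt_6_general p q k hq hle
end

section
/- Fix p, q, n ≥ 1 and write n = (pq+1)ℓ + k with ℓ ≥ 0 and 0 ≤ k ≤ pq. If (p-1)q < k ≤ pq then ⌊p(n+q+1)/(pq+1)⌋ = pℓ + ⌊(k-1)/q⌋ + 1, and if k ≤ (p-1)q then ⌊p(n+q+1)/(pq+1)⌋ = pℓ + ⌊k/q⌋ + 1. -/
/-!
Since `p * (n + q + 1) = p * ℓ * (p * q + 1) + p * (k + q + 1)`, the quotient is `p * ℓ` plus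
`⌊p (k + q + 1) / (p q + 1)⌋`. Writing `k = q j + r` with `r < q`, one has
`p (k + q + 1) = (j + 1)(p q + 1) + (p (r + 1) - (j + 1))`, and the excess lies in `[0, p q + 1)`
as soon as `j + 1 ≤ p`, i.e. `k ≤ (p - 1) q`; above that range the quotient saturates at `p`.
-/

namespace Nat

lemma mul_add_add_one_div_mul_add_one (p q ℓ k : ℕ) :
    p * ((p * q + 1) * ℓ + k + q + 1) / (p * q + 1) = p * ℓ + p * (k + q + 1) / (p * q + 1) := by
  have h : p * ((p * q + 1) * ℓ + k + q + 1) = p * (k + q + 1) + p * ℓ * (p * q + 1) := by ring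
  rw [h, Nat.add_mul_div_right _ _ (succ_pos _), Nat.add_comm]

lemma mul_add_add_one_div_mul_add_one_of_sub_one_mul_lt {p q k : ℕ} (hk : k ≤ p * q)
    (h : (p - 1) * q < k) : p * (k + q + 1) / (p * q + 1) = p := by
  have hpq : p * q ≤ k + q := by
    rcases p with _ | p
    · simp
    · simpa [add_mul] using h.le
  apply Nat.div_eq_of_lt_le
  · nlinarith [Nat.mul_le_mul_left p hpq]
  · nlinarith [Nat.mul_le_mul_left p hk]

lemma mul_add_add_one_div_mul_add_one_of_lt {p q j r : ℕ} (hr : r < q) (hj : j + 1 ≤ p) :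
    p * (q * j + r + q + 1) / (p * q + 1) = j + 1 := by
  have hexcess : p * (q * j + r + q + 1) + (j + 1) = (j + 1) * (p * q + 1) + p * (r + 1) := by
    ring
  have hlo : j + 1 ≤ p * (r + 1) := hj.trans (Nat.le_mul_of_pos_right p (succ_pos r))
  have hhi : p * (r + 1) ≤ p * q := Nat.mul_le_mul_left p hr
  apply Nat.div_eq_of_lt_le
  · omega
  · rw [Nat.add_one_mul (j + 1)]
    omega

lemma mul_add_add_one_div_mul_add_one_of_le_sub_one_mul {p q k : ℕ} (hp : 1 ≤ p) (hq : 1 ≤ q)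
    (h : k ≤ (p - 1) * q) : p * (k + q + 1) / (p * q + 1) = k / q + 1 := by
  have hdiv : k / q ≤ p - 1 := by
    simpa [Nat.mul_div_cancel _ hq] using Nat.div_le_div_right (c := q) h
  conv_lhs => rw [← Nat.div_add_mod k q]
  exact mul_add_add_one_div_mul_add_one_of_lt (Nat.mod_lt k hq) (by omega)

lemma sub_one_div_eq_sub_one_of_sub_one_mul_lt {p q k : ℕ} (hk : k ≤ p * q)
    (h : (p - 1) * q < k) : (k - 1) / q = p - 1 := by
  rcases p with _ | p
  · omega
  · apply Nat.div_eq_of_lt_le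
    · simp only [add_tsub_cancel_right] at h ⊢
      omega
    · simp only [add_tsub_cancel_right, add_mul, one_mul] at h hk ⊢
      omega

end Nat

theorem stmt_12_general (p q n ℓ k : ℕ) (hp : 1 ≤ p) (hq : 1 ≤ q)
    (hdecomp : n = (p * q + 1) * ℓ + k) (hk : k ≤ p * q) :
    ((p - 1) * q < k → p * (n + q + 1) / (p * q + 1) = p * ℓ + (k - 1) / q + 1) ∧
    (k ≤ (p - 1) * q → p * (n + q + 1) / (p * q + 1) = p * ℓ + k / q + 1) := by
  subst hdecomp
  rw [Nat.mul_add_add_one_div_mul_add_one]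
  refine ⟨fun h => ?_, fun h => ?_⟩
  · rw [Nat.mul_add_add_one_div_mul_add_one_of_sub_one_mul_lt hk h,
      Nat.sub_one_div_eq_sub_one_of_sub_one_mul_lt hk h]
    omega
  · rw [Nat.mul_add_add_one_div_mul_add_one_of_le_sub_one_mul hp hq h, Nat.add_assoc]

theorem stmt_12 (p q n ℓ k : ℕ) (hp : 1 ≤ p) (hq : 1 ≤ q) (hn : 1 ≤ n)
    (hdecomp : n = (p * q + 1) * ℓ + k) (hk : k ≤ p * q) :
    ((p - 1) * q < k → p * (n + q + 1) / (p * q + 1) = p * ℓ + (k - 1) / q + 1) ∧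
    (k ≤ (p - 1) * q → p * (n + q + 1) / (p * q + 1) = p * ℓ + k / q + 1) :=
  stmt_12_general p q n ℓ k hp hq hdecomp hk
end

section
/- Fix p, q ≥ 1 and n ≥ 1. Among all sets F ⊆ {1,...,n+1} with max F = n+1, p·min F ≥ |F|, and F a singleton or an arithmetic progression of common difference q, the maximum possible cardinality is ⌊(1/q)(n + 1 - ⌈(n+1+q)/(pq+1)⌉)⌋ + 1. -/
/-- F is a singleton or an arithmetic progression with common difference q. -/
def IsAP (q : ℕ) (F : Finset ℕ) : Prop :=
  F.card = 1 ∨ ∃ a m : ℕ, 2 ≤ m ∧ F = (Finset.range m).image (fun i => a + q * i)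

lemma ceilDiv_bounds (a b : ℕ) (hb : 0 < b) :
    a ≤ b * ceilDiv a b ∧ b * ceilDiv a b ≤ a + b - 1 := by
  have h1 := Nat.div_add_mod (a + b - 1) b
  have h2 := Nat.mod_lt (a + b - 1) hb
  unfold ceilDiv
  obtain ⟨X, hX⟩ : ∃ X, b * ((a + b - 1) / b) = X := ⟨_, rfl⟩
  obtain ⟨r, hr⟩ : ∃ r, (a + b - 1) % b = r := ⟨_, rfl⟩
  rw [hX] at h1 ⊢
  rw [hr] at h1 h2
  omega

lemma div_bounds (s q : ℕ) (hq : 0 < q) :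
    q * (s / q) ≤ s ∧ s < q * (s / q) + q := by
  have h1 := Nat.div_add_mod s q
  have h2 := Nat.mod_lt s hq
  obtain ⟨X, hX⟩ : ∃ X, q * (s / q) = X := ⟨_, rfl⟩
  obtain ⟨r, hr⟩ : ∃ r, s % q = r := ⟨_, rfl⟩
  rw [hX] at h1 ⊢
  rw [hr] at h1 h2
  omega

lemma apF_card (a q t : ℕ) (hq : 1 ≤ q) :
    ((Finset.range (t + 1)).image (fun i => a + q * i)).card = t + 1 := by
  rw [Finset.card_image_of_injective _ (fun i j h => by
    exact Nat.eq_of_mul_eq_mul_left hq (Nat.add_left_cancel h))]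
  simp

lemma apF_max (a q t : ℕ) (F : Finset ℕ)
    (hF : F = (Finset.range (t + 1)).image (fun i => a + q * i)) (hne : F.Nonempty) :
    sSup (F : Set ℕ) = a + q * t := by
  rw [hne.csSup_eq_max']
  apply le_antisymm
  · apply Finset.max'_le
    intro y hy
    rw [hF] at hy
    simp only [Finset.mem_image, Finset.mem_range] at hy
    obtain ⟨i, hi, rfl⟩ := hy
    have : q * i ≤ q * t := Nat.mul_le_mul_left q (by omega)
    omega
  · apply Finset.le_max'
    rw [hF]
    simp only [Finset.mem_image, Finset.mem_range]
    exact ⟨t, by omega, rfl⟩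

lemma apF_min (a q t : ℕ) (F : Finset ℕ)
    (hF : F = (Finset.range (t + 1)).image (fun i => a + q * i)) (hne : F.Nonempty) :
    sInf (F : Set ℕ) = a := by
  rw [hne.csInf_eq_min']
  apply le_antisymm
  · apply Finset.min'_le
    rw [hF]
    simp only [Finset.mem_image, Finset.mem_range]
    exact ⟨0, by omega, by simp⟩
  · apply Finset.le_min'
    intro y hy
    rw [hF] at hy
    simp only [Finset.mem_image, Finset.mem_range] at hy
    obtain ⟨i, hi, rfl⟩ := hy
    omega

/-- among all F ⊆ {1,...,n+1} with max F = n+1, p·min F ≥ |F| and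
F a singleton or AP of difference q, the maximum cardinality is
⌊(1/q)(n + 1 - ⌈(n+1+q)/(pq+1)⌉)⌋ + 1. -/
theorem stmt_13 (p q n : ℕ) (hp : 1 ≤ p) (hq : 1 ≤ q) (hn : 1 ≤ n) :
    IsGreatest
      {m : ℕ | ∃ F : Finset ℕ,
        F.Nonempty ∧ F ⊆ Finset.Icc 1 (n + 1) ∧
        sSup (F : Set ℕ) = n + 1 ∧
        p * sInf (F : Set ℕ) ≥ F.card ∧ IsAP q F ∧ F.card = m}
      ((n + 1 - ceilDiv (n + 1 + q) (p * q + 1)) / q + 1) := by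
  have hb0 : 0 < p * q + 1 := Nat.succ_pos _
  set b := p * q + 1 with hbdef
  set K := ceilDiv (n + 1 + q) b with hKdef
  obtain ⟨hKlow, hKup⟩ := ceilDiv_bounds (n + 1 + q) b hb0
  rw [← hKdef] at hKlow hKup
  have hKup' : b * K ≤ n + q + b := by
    have h : n + 1 + q + b - 1 = n + q + b := by omega
    exact h ▸ hKup
  have hK1 : 1 ≤ K := by
    rcases Nat.eq_zero_or_pos K with h | h
    · rw [h, mul_zero] at hKlow; omega
    · exact h
  have hKn : K ≤ n + 1 := by
    by_contra h
    have h1 : b * (n + 2) ≤ b * K := Nat.mul_le_mul_left b (by omega)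
    have h2 : q ≤ p * q := Nat.le_mul_of_pos_left q hp
    have h3 : b * (n + 2) = p * q * n + 2 * (p * q) + n + 2 := by rw [hbdef]; ring
    have h4 : 0 ≤ p * q * n := Nat.zero_le _
    rw [hbdef] at hKup'
    rw [← hbdef] at hKup'; linarith
  set s := n + 1 - K with hsdef
  have hsK : s + K = n + 1 := by omega
  set t := s / q with htdef
  obtain ⟨ht1, ht2⟩ := div_bounds s q hq
  rw [← htdef] at ht1 ht2
  -- key: t + 1 ≤ p * K
  have hpK : t + 1 ≤ p * K := by
    have e1 : b * K = q * (p * K) + K := by rw [hbdef]; ring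
    have e2 : q * t + q ≤ q * (p * K) := by linarith
    have e3 : q * (t + 1) ≤ q * (p * K) := by rw [mul_add, mul_one]; exact e2
    exact Nat.le_of_mul_le_mul_left e3 hq
  constructor
  · -- membership
    obtain ⟨u, hu⟩ : ∃ u, q * t = u := ⟨_, rfl⟩
    rw [hu] at ht1 ht2
    set a := s - u + K with hadef
    have hau : a + u = n + 1 := by omega
    have haK : K ≤ a := by omega
    have ha1 : 1 ≤ a := by omega
    have hpa : t + 1 ≤ p * a := le_trans hpK (Nat.mul_le_mul_left p haK)
    set F : Finset ℕ := (Finset.range (t + 1)).image (fun i => a + q * i) with hFdef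
    have hne : F.Nonempty :=
      ⟨a + q * t, by rw [hFdef]; exact Finset.mem_image_of_mem _ (Finset.self_mem_range_succ t)⟩
    have hcard : F.card = t + 1 := apF_card a q t hq
    refine ⟨F, hne, ?_, ?_, ?_, ?_, hcard⟩
    · intro x hx
      rw [hFdef] at hx
      simp only [Finset.mem_image, Finset.mem_range] at hx
      obtain ⟨i, hi, rfl⟩ := hx
      have hqi : q * i ≤ u := hu ▸ Nat.mul_le_mul_left q (by omega)
      obtain ⟨v, hv⟩ : ∃ v, q * i = v := ⟨_, rfl⟩
      rw [hv] at hqi ⊢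
      rw [Finset.mem_Icc]
      omega
    · rw [apF_max a q t F hFdef hne, hu, hau]
    · rw [apF_min a q t F hFdef hne, hcard]
      exact hpa
    · rcases Nat.eq_zero_or_pos t with h | h
      · left; rw [hcard, h]
      · right; exact ⟨a, t + 1, by omega, hFdef⟩
  · -- upper bound
    rintro m ⟨F, hne, hsub, hsup, hmin, hap, hcard⟩
    rcases hap with h1 | ⟨a', m', hm', hFe⟩
    · rw [← hcard, h1]; exact Nat.le_add_left 1 _
    · obtain ⟨t', rfl⟩ : ∃ t', m' = t' + 1 := ⟨m' - 1, by omega⟩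
      have hcardF : F.card = t' + 1 := hFe ▸ apF_card a' q t' hq
      have hsum : a' + q * t' = n + 1 := by
        rw [apF_max a' q t' F hFe hne] at hsup; exact hsup
      have hmin' : t' + 1 ≤ p * a' := by
        rw [apF_min a' q t' F hFe hne, hcardF] at hmin; exact hmin
      have ha'b : n + 1 + q ≤ a' * b := by
        have e1 : a' * b = q * (p * a') + a' := by rw [hbdef]; ring
        have e2 : q * (t' + 1) ≤ q * (p * a') := Nat.mul_le_mul_left q hmin'
        have e3 : q * (t' + 1) = q * t' + q := by ring
        linarith
      have hKa : K ≤ a' := by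
        by_contra h
        have h1 : b * (a' + 1) ≤ b * K := Nat.mul_le_mul_left b (by omega)
        have h2 : b * (a' + 1) = a' * b + b := by ring
        linarith
      have hts : q * t' ≤ s := by linarith
      have : t' ≤ t := by
        rw [htdef]
        exact (Nat.le_div_iff_mul_le hq).mpr (by rw [mul_comm]; exact hts)
      rw [← hcard, hcardF]
      exact Nat.succ_le_succ this
end
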